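/- arXiv:2505.00926 — 2 statements merged into one kernel-verified Lean document; each statement's English description precedes it below -/
import Mathlib

section
/- The softmax function with scaling factor λ > 0 is (1/λ)-Lipschitz: for all vectors x, y in ℝⁿ, ‖φ(x/λ) − φ(y/λ)‖ ≤ (1/λ)‖x − y‖, where φ is the softmax map with components [φ(v)]_i = exp(v_i)/∑_j exp(v_j) and ‖·‖ is the Euclidean norm. -/
/-!
Softmax is the gradient of log-sum-exp, so its Jacobian at `v` is `diag p - p pᵀ` with
`p = softmax v`, i.e. `u ↦ (pᵢ (uᵢ - ⟨p, u⟩))ᵢ`. As `p` is a probability vector,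
`∑ pᵢ² (uᵢ - m)² ≤ ∑ pᵢ (uᵢ - m)² = ∑ pᵢ uᵢ² - m² ≤ ‖u‖²` for `m = ⟨p, u⟩`, so the Jacobian
has operator norm at most `1` and softmax is `1`-Lipschitz by the mean value inequality.
-/

noncomputable def softmax {n : ℕ} (v : EuclideanSpace ℝ (Fin n)) :
    EuclideanSpace ℝ (Fin n) :=
  WithLp.toLp 2 (fun i => Real.exp (v i) / ∑ j, Real.exp (v j))

open Matrix Real

section ProbabilityVector

variable {ι : Type*} [Fintype ι] {p : ι → ℝ}

theorem sum_mul_sub_sq_eq_sum_mul_sq_sub_sq (hp : ∑ i, p i = 1) (u : ι → ℝ) :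
    ∑ i, p i * (u i - ∑ j, p j * u j) ^ 2 = ∑ i, p i * u i ^ 2 - (∑ j, p j * u j) ^ 2 := by
  set m := ∑ j, p j * u j
  calc ∑ i, p i * (u i - m) ^ 2
      = ∑ i, p i * u i ^ 2 - 2 * m * ∑ i, p i * u i + m ^ 2 * ∑ i, p i := by
        simp only [Finset.mul_sum, ← Finset.sum_sub_distrib, ← Finset.sum_add_distrib]
        exact Finset.sum_congr rfl fun i _ => by ring
    _ = _ := by rw [hp]; ring

theorem sum_sq_mul_sub_le_sum_sq (hp0 : ∀ i, 0 ≤ p i) (hp : ∑ i, p i = 1) (u : ι → ℝ) :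
    ∑ i, (p i * (u i - ∑ j, p j * u j)) ^ 2 ≤ ∑ i, u i ^ 2 := by
  have hp1 : ∀ i, p i ≤ 1 := fun i =>
    hp ▸ Finset.single_le_sum (fun j _ => hp0 j) (Finset.mem_univ i)
  calc ∑ i, (p i * (u i - ∑ j, p j * u j)) ^ 2
      ≤ ∑ i, p i * (u i - ∑ j, p j * u j) ^ 2 := by
        gcongr with i
        rw [mul_pow]
        exact mul_le_mul_of_nonneg_right (pow_le_of_le_one (hp0 i) (hp1 i) two_ne_zero)
          (sq_nonneg _)
    _ ≤ ∑ i, p i * u i ^ 2 := by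
        rw [sum_mul_sub_sq_eq_sum_mul_sq_sub_sq hp]
        linarith [sq_nonneg (∑ j, p j * u j)]
    _ ≤ ∑ i, u i ^ 2 := by
        gcongr with i
        exact mul_le_of_le_one_left (sq_nonneg _) (hp1 i)

variable [DecidableEq ι]

theorem toEuclideanCLM_diagonal_sub_vecMulVec_apply (p : ι → ℝ) (u : EuclideanSpace ℝ ι) (i : ι) :
    toEuclideanCLM (𝕜 := ℝ) (diagonal p - vecMulVec p p) u i = p i * (u i - ∑ j, p j * u j) := by
  simp [mulVec_diagonal, vecMulVec_mulVec, dotProduct, mul_sub, mul_comm]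

theorem norm_toEuclideanCLM_diagonal_sub_vecMulVec_le_one (hp0 : ∀ i, 0 ≤ p i)
    (hp : ∑ i, p i = 1) : ‖toEuclideanCLM (𝕜 := ℝ) (diagonal p - vecMulVec p p)‖ ≤ 1 := by
  refine ContinuousLinearMap.opNorm_le_bound _ zero_le_one fun u => ?_
  rw [one_mul, ← sq_le_sq₀ (norm_nonneg _) (norm_nonneg _), EuclideanSpace.norm_sq_eq,
    EuclideanSpace.norm_sq_eq]
  simpa only [toEuclideanCLM_diagonal_sub_vecMulVec_apply, Real.norm_eq_abs, sq_abs]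
    using sum_sq_mul_sub_le_sum_sq hp0 hp u

end ProbabilityVector

section Softmax

variable {n : ℕ}

theorem softmax_apply (v : EuclideanSpace ℝ (Fin n)) (i : Fin n) :
    softmax v i = exp (v i) / ∑ j, exp (v j) := rfl

theorem softmax_nonneg (v : EuclideanSpace ℝ (Fin n)) (i : Fin n) : 0 ≤ softmax v i :=
  div_nonneg (exp_pos _).le (Finset.sum_nonneg fun _ _ => (exp_pos _).le)

theorem sum_exp_pos [NeZero n] (v : EuclideanSpace ℝ (Fin n)) : 0 < ∑ j, exp (v j) :=
  Finset.sum_pos (fun _ _ => exp_pos _) Finset.univ_nonempty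

theorem sum_softmax [NeZero n] (v : EuclideanSpace ℝ (Fin n)) : ∑ i, softmax v i = 1 := by
  simp only [softmax_apply, ← Finset.sum_div, div_self (sum_exp_pos v).ne']

noncomputable def logSumExp (v : EuclideanSpace ℝ (Fin n)) : ℝ := log (∑ j, exp (v j))

theorem softmax_apply_eq_exp_sub_logSumExp [NeZero n] (v : EuclideanSpace ℝ (Fin n)) (i : Fin n) :
    softmax v i = exp (v i - logSumExp v) := by
  rw [exp_sub, logSumExp, exp_log (sum_exp_pos v), softmax_apply]

theorem hasFDerivAt_logSumExp [NeZero n] (v : EuclideanSpace ℝ (Fin n)) :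
    HasFDerivAt logSumExp (innerSL ℝ (softmax v)) v := by
  have hsum : HasFDerivAt (fun w : EuclideanSpace ℝ (Fin n) => ∑ j, exp (w j))
      (∑ j, exp (v j) • PiLp.proj 2 (fun _ => ℝ) j) v :=
    HasFDerivAt.fun_sum fun j _ => (PiLp.hasFDerivAt_apply 2 v j).exp
  refine (hsum.log (sum_exp_pos v).ne').congr_fderiv ?_
  ext u
  simp [PiLp.inner_apply, softmax_apply, Finset.mul_sum, div_eq_inv_mul, mul_comm, mul_left_comm,
    mul_assoc]

noncomputable def softmaxJacobian (v : EuclideanSpace ℝ (Fin n)) : Matrix (Fin n) (Fin n) ℝ :=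
  diagonal (softmax v).ofLp - vecMulVec (softmax v).ofLp (softmax v).ofLp

theorem hasFDerivAt_softmax [NeZero n] (v : EuclideanSpace ℝ (Fin n)) :
    HasFDerivAt softmax (toEuclideanCLM (𝕜 := ℝ) (softmaxJacobian v)) v := by
  rw [← hasFDerivWithinAt_univ, hasFDerivWithinAt_piLp]
  intro i
  have h := ((PiLp.hasFDerivAt_apply 2 v i).fun_sub (hasFDerivAt_logSumExp v)).exp
  simp only [← softmax_apply_eq_exp_sub_logSumExp] at h
  refine (h.congr_fderiv ?_).hasFDerivWithinAt
  ext u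
  rw [ContinuousLinearMap.comp_apply, PiLp.proj_apply, softmaxJacobian,
    toEuclideanCLM_diagonal_sub_vecMulVec_apply]
  simp [PiLp.inner_apply, mul_comm]

theorem lipschitzWith_one_softmax : LipschitzWith 1 (softmax (n := n)) := by
  rcases n.eq_zero_or_pos with rfl | hn
  · exact LipschitzWith.of_dist_le_mul fun x y => by simp [Subsingleton.elim x y]
  have : NeZero n := ⟨hn.ne'⟩
  refine lipschitzOnWith_univ.mp <| convex_univ.lipschitzOnWith_of_nnnorm_hasFDerivWithin_le
    (fun v _ => (hasFDerivAt_softmax v).hasFDerivWithinAt) fun v _ => ?_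
  rw [← NNReal.coe_le_coe, coe_nnnorm, NNReal.coe_one]
  exact norm_toEuclideanCLM_diagonal_sub_vecMulVec_le_one (softmax_nonneg v) (sum_softmax v)

end Softmax

theorem softmax_lipschitz {n : ℕ} (lam : ℝ) (hlam : 0 < lam)
    (x y : EuclideanSpace ℝ (Fin n)) :
    ‖softmax (lam⁻¹ • x) - softmax (lam⁻¹ • y)‖ ≤ (1 / lam) * ‖x - y‖ := by
  calc ‖softmax (lam⁻¹ • x) - softmax (lam⁻¹ • y)‖ ≤ ‖lam⁻¹ • x - lam⁻¹ • y‖ := by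
        simpa using lipschitzWith_one_softmax.norm_sub_le (lam⁻¹ • x) (lam⁻¹ • y)
    _ = (1 / lam) * ‖x - y‖ := by
        rw [← smul_sub, norm_smul, Real.norm_of_nonneg (inv_nonneg.2 hlam.le), one_div]
end

section
/- Truncated CoT correctness: Suppose an oracle f takes any binary sequence and returns 1 if its first and last tokens are equal and −1 otherwise. Given input X = w₁…w_L, define iteratively for t = 1,…,L−1: let y_t = f(w_{t}…w_{L+t−1}) (the current window), set w_{L+t} = a if y_t = 1 and w_{L+t} = b if y_t = −1, and slide the window forward by one. Then y_{L−1} = 1 if and only if the number of b's in the original sequence w₁…w_L is even. -/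
/-- `false` encodes token `a`, `true` encodes token `b`.  The tokens
`w 0, …, w (L-1)` form the original sequence; for each step `t < L - 1`,
the oracle compares the first and last tokens of the current window
`w t, …, w (L + t - 1)` and the prediction is appended as token `w (L + t)`
(`false`/`a` iff the compared tokens are equal).  The final prediction is
`w (2L - 2)`. -/
theorem truncated_CoT_correct (L : ℕ) (hL : 1 ≤ L) (w : ℕ → Bool)
    (hcot : ∀ t : ℕ, t < L - 1 → (w (L + t) = false ↔ w t = w (L + t - 1))) :
    (w (2 * L - 2) = false ↔
      Even ((Finset.range L).filter (fun i => w i = true)).card) := by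
  have key : ∀ k, k ≤ L - 1 →
      (w (L - 1 + k) = false ↔
        (Even ((Finset.range k).filter (fun i => w i = true)).card ↔
          w (L - 1) = false)) := by
    intro k
    induction k with
    | zero => intro _; simp
    | succ k ih =>
        intro hk
        have hklt : k < L - 1 := hk
        have ih' := ih (Nat.le_of_succ_le hk)
        have h1 : L - 1 + (k + 1) = L + k := by omega
        have h2 : L + k - 1 = L - 1 + k := by omega
        have hc := hcot k hklt
        rw [h2] at hc
        rw [h1, hc]
        have hknot : k ∉ (Finset.range k).filter (fun i => w i = true) := by
          simp
        cases hwk : w k with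
        | false =>
            have hins : (Finset.range (k+1)).filter (fun i => w i = true)
                = (Finset.range k).filter (fun i => w i = true) := by
              rw [Finset.range_add_one, Finset.filter_insert, if_neg (by simp [hwk])]
            rw [hins]
            constructor
            · intro h
              rw [← ih']
              cases hv : w (L - 1 + k) <;> rw [hv] at h <;> simp_all
            · intro h
              rw [← ih'] at h
              cases hv : w (L - 1 + k) <;> simp_all
        | true =>
            have hins : (Finset.range (k+1)).filter (fun i => w i = true)
                = insert k ((Finset.range k).filter (fun i => w i = true)) := by
              rw [Finset.range_add_one, Finset.filter_insert, if_pos (by simp [hwk])]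
            rw [hins, Finset.card_insert_of_notMem hknot, Nat.even_add_one]
            constructor
            · intro h
              cases hv : w (L - 1 + k)
              · rw [hv] at h; simp at h
              · have : ¬ (w (L - 1 + k) = false) := by simp [hv]
                rw [ih'] at this
                tauto
            · intro h
              cases hv : w (L - 1 + k)
              · have := ih'.mp hv
                tauto
              · simp [hv]
  have hfin := key (L - 1) le_rfl
  have h3 : 2 * L - 2 = L - 1 + (L - 1) := by omega
  rw [h3, hfin]
  have hknot : L - 1 ∉ (Finset.range (L-1)).filter (fun i => w i = true) := by simp
  have hL' : L = (L - 1) + 1 := by omega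
  cases hv : w (L - 1) with
  | false =>
      have hrange : (Finset.range L).filter (fun i => w i = true)
          = (Finset.range (L-1)).filter (fun i => w i = true) := by
        rw [hL', Finset.range_add_one, Finset.filter_insert, if_neg (by simp [hv])]; simp
      rw [hrange]
      simp
  | true =>
      have hrange : (Finset.range L).filter (fun i => w i = true)
          = insert (L-1) ((Finset.range (L-1)).filter (fun i => w i = true)) := by
        rw [hL', Finset.range_add_one, Finset.filter_insert, if_pos (by simp [hv])]; simp
      rw [hrange, Finset.card_insert_of_notMem hknot, Nat.even_add_one]
      simp
end
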